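/- The subgroup Γ_C acts freely on the upper half-plane: for every g ∈ Γ_C and every z ∈ ℍ, if g • z = z then g = 1. -/

import Mathlib

open UpperHalfPlane MatrixGroups

noncomputable section

/-- `s k = Σᵢ 2·tᵢ·3ⁱ` where `k = Σᵢ tᵢ·2ⁱ` is the binary expansion of `k`;
equivalently `s 0 = 0`, `s (2j) = 3·(s j)`, `s (2j+1) = 3·(s j) + 2`. -/
def s : ℕ → ℕ
  | 0 => 0
  | k + 1 =>
    if (k + 1) % 2 = 0 then 3 * s ((k + 1) / 2)
    else 3 * s ((k + 1) / 2) + 2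
decreasing_by all_goals (simp_wf; omega)

/-- The midpoint of the middle third removed at stage `n` from the `k`-th interval of
stage `n−1` of the middle-thirds construction on `[1,2]`. -/
def alphaC (n k : ℕ) : ℝ := 1 + (3 * s k + 1) / 3 ^ n + 1 / (2 * 3 ^ n)

/-- The common radius of the half-circles at stage `n`. -/
def radC (n : ℕ) : ℝ := 1 / (4 * 3 ^ n)

lemma radC_ne (n : ℕ) : radC n ≠ 0 := by unfold radC; positivity

/-- `N(β,β',r)` is the element of `SL(2,ℝ)` whose Möbius transformation has isometric circle
the half-circle of radius `r` centered at `β`, mapped onto the half-circle of radius `r`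
centered at `β'`. -/
def Nmat (β β' r : ℝ) (hr : r ≠ 0) : SL(2, ℝ) :=
  ⟨!![β' / r, -(β * β' + r ^ 2) / r; 1 / r, -β / r], by
    rw [Matrix.det_fin_two_of]; field_simp; ring⟩

/-- `M(α,r) := N(α, −α, r)`. -/
def Mmat (a r : ℝ) (hr : r ≠ 0) : SL(2, ℝ) := Nmat a (-a) r hr

/-- The subgroup of `SL(2,ℝ)` generated by the `M(α(n,k), r(n))`. -/
def ΓC : Subgroup SL(2, ℝ) :=
  Subgroup.closure
    {g | ∃ n k : ℕ, 1 ≤ n ∧ k < 2 ^ (n - 1) ∧ g = Mmat (alphaC n k) (radC n) (radC_ne n)}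

/-!
`Γ_C` is a Schottky group. The isometric circles of the generators `M(α(n,k), r(n))` and of their
inverses are the half-circles of radius `r(n)` about `±α(n,k)`, and the corresponding closed disks
are pairwise disjoint because the `α(n,k)` are the midpoints of the gaps of the middle-thirds Cantor
set. Outside its isometric circle `|z - β| = r`, the map `N(β,β',r)` strictly lowers `Im z` and
lands in the disk `|w - β'| < r`; by ping-pong, a reduced word moves every point outside the disk of
its last letter strictly downwards. Hence a nontrivial cyclically reduced word fixes no point: a
point inside the disk of its last letter lies outside the disk of the inverse of its first letter,
so the inverse word moves it down. Every element of the free group is conjugate to a cyclically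
reduced word, and the free group maps onto `Γ_C`.
-/

lemma Nmat_inv (β β' r : ℝ) (hr : r ≠ 0) :
    (Nmat β β' r hr)⁻¹ = Nmat β' β (-r) (neg_ne_zero.mpr hr) := by
  ext i j
  rw [Matrix.SpecialLinearGroup.coe_inv]
  fin_cases i <;> fin_cases j <;> simp [Nmat, Matrix.adjugate_fin_two] <;> ring

lemma coe_sub_ofReal_ne_zero (z : ℍ) (a : ℝ) : (z : ℂ) - a ≠ 0 := by
  intro h
  simpa [z.im_pos.ne'] using congrArg Complex.im h

lemma coe_Nmat_smul (β β' r : ℝ) (hr : r ≠ 0) (z : ℍ) :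
    ((Nmat β β' r hr • z : ℍ) : ℂ) = β' - r ^ 2 / ((z : ℂ) - β) := by
  have hz := coe_sub_ofReal_ne_zero z β
  have hr' : (r : ℂ) ≠ 0 := mod_cast hr
  rw [coe_specialLinearGroup_apply]
  simp only [Nmat, Algebra.algebraMap_self, RingHom.id_apply, Matrix.of_apply, Matrix.cons_val',
    Matrix.cons_val_zero, Matrix.cons_val_one, Matrix.cons_val_fin_one]
  push_cast
  rw [show (1 / r : ℂ) * z + -β / r = (z - β) / r by ring, div_eq_iff (div_ne_zero hz hr')]
  field_simp
  ring

open FreeGroup (IsReduced IsCyclicallyReduced invRev reduceCyclically)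

lemma FreeGroup.IsReduced.invRev {α : Type*} {L : List (α × Bool)} (h : IsReduced L) :
    IsReduced (invRev L) := by
  rw [IsReduced, FreeGroup.invRev, List.isChain_reverse, List.isChain_map]
  exact h.imp fun a b hab hba => by simpa using (hab hba.symm).symm

lemma FreeGroup.getLast_invRev {α : Type*} {L : List (α × Bool)} (hL : L ≠ [])
    (h : invRev L ≠ []) : (invRev L).getLast h = ((L.head hL).1, !(L.head hL).2) := by
  simp [FreeGroup.invRev, List.getLast_reverse, List.head_map]

/-- `center (i, true)` and `center (i, false)` are the centres of the isometric circles of the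
`i`-th generator and of its inverse; the generator maps the first circle onto the second. -/
structure SchottkyData (ι : Type*) where
  center : ι × Bool → ℝ
  radius : ι → ℝ
  radius_pos : ∀ i, 0 < radius i
  disjoint : Pairwise fun ℓ ℓ' : ι × Bool => radius ℓ.1 + radius ℓ'.1 < |center ℓ - center ℓ'|

namespace SchottkyData

variable {ι : Type*} (S : SchottkyData ι)

def gen (i : ι) : SL(2, ℝ) :=
  Nmat (S.center (i, true)) (S.center (i, false)) (S.radius i) (S.radius_pos i).ne'

def hom : FreeGroup ι →* SL(2, ℝ) := FreeGroup.lift S.gen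

def letter (ℓ : ι × Bool) : SL(2, ℝ) := cond ℓ.2 (S.gen ℓ.1) (S.gen ℓ.1)⁻¹

lemma hom_mk_cons (ℓ : ι × Bool) (L : List (ι × Bool)) :
    S.hom (FreeGroup.mk (ℓ :: L)) = S.letter ℓ * S.hom (FreeGroup.mk L) := by
  simp only [hom, FreeGroup.lift_mk, List.map_cons, List.prod_cons, letter]

lemma coe_letter_smul (ℓ : ι × Bool) (z : ℍ) :
    ((S.letter ℓ • z : ℍ) : ℂ) =
      S.center (ℓ.1, !ℓ.2) - S.radius ℓ.1 ^ 2 / ((z : ℂ) - S.center ℓ) := by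
  obtain ⟨i, _ | _⟩ := ℓ
  · simp [letter, gen, Nmat_inv, coe_Nmat_smul]
  · simp [letter, gen, coe_Nmat_smul]

lemma letter_ping_pong (ℓ : ι × Bool) (z : ℍ) (hz : S.radius ℓ.1 < ‖(z : ℂ) - S.center ℓ‖) :
    ‖((S.letter ℓ • z : ℍ) : ℂ) - S.center (ℓ.1, !ℓ.2)‖ < S.radius ℓ.1 ∧
      (S.letter ℓ • z).im < z.im := by
  have hr := S.radius_pos ℓ.1
  have hpos : 0 < ‖(z : ℂ) - S.center ℓ‖ := hr.trans hz
  rw [← UpperHalfPlane.coe_im, coe_letter_smul]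
  constructor
  · rw [sub_sub_cancel_left, norm_neg, norm_div, norm_pow, Complex.norm_real,
      Real.norm_of_nonneg hr.le, div_lt_iff₀ hpos]
    nlinarith
  · rw [Complex.sub_im, Complex.ofReal_im, zero_sub, Complex.div_im, ← Complex.ofReal_pow,
      Complex.ofReal_re, Complex.ofReal_im, Complex.normSq_eq_norm_sq]
    simp only [Complex.sub_im, Complex.ofReal_im, sub_zero, UpperHalfPlane.coe_im, zero_mul,
      zero_div, zero_sub, neg_neg]
    rw [div_lt_iff₀ (by positivity)]
    linarith [mul_lt_mul_of_pos_left (pow_lt_pow_left₀ hz hr.le two_ne_zero) z.im_pos]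

lemma radius_lt_norm_sub_of_le {ℓ ℓ' : ι × Bool} (h : ℓ ≠ ℓ') {w : ℂ}
    (hw : ‖w - S.center ℓ‖ ≤ S.radius ℓ.1) : S.radius ℓ'.1 < ‖w - S.center ℓ'‖ := by
  have hsep := S.disjoint h
  have htri := norm_sub_le_norm_sub_add_norm_sub ((S.center ℓ : ℝ) : ℂ) w (S.center ℓ')
  rw [← Complex.ofReal_sub, Complex.norm_real, Real.norm_eq_abs, norm_sub_rev] at htri
  linarith

theorem ping_pong : ∀ (L : List (ι × Bool)) (hL : L ≠ []), IsReduced L → ∀ z : ℍ,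
    S.radius (L.getLast hL).1 < ‖(z : ℂ) - S.center (L.getLast hL)‖ →
    ‖((S.hom (FreeGroup.mk L) • z : ℍ) : ℂ) - S.center ((L.head hL).1, !(L.head hL).2)‖ <
        S.radius (L.head hL).1 ∧ (S.hom (FreeGroup.mk L) • z).im < z.im
  | [ℓ], _, _, z, hz => by
    simpa [hom_mk_cons, ← FreeGroup.one_eq_mk] using S.letter_ping_pong ℓ z hz
  | ℓ :: ℓ' :: L, _, hred, z, hz => by
    rw [FreeGroup.isReduced_cons_cons] at hred
    obtain ⟨hdisk, him⟩ := ping_pong (ℓ' :: L) (List.cons_ne_nil _ _) hred.2 z hz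
    have hne : (ℓ'.1, !ℓ'.2) ≠ ℓ := by
      rintro rfl
      simp at hred
    rw [hom_mk_cons, mul_smul]
    have := S.letter_ping_pong ℓ _ (S.radius_lt_norm_sub_of_le hne hdisk.le)
    exact ⟨this.1, this.2.trans him⟩

theorem smul_ne_self_of_isCyclicallyReduced {L : List (ι × Bool)} (hL : IsCyclicallyReduced L)
    (hne : L ≠ []) (z : ℍ) : S.hom (FreeGroup.mk L) • z ≠ z := by
  intro hfix
  by_cases hz : S.radius (L.getLast hne).1 < ‖(z : ℂ) - S.center (L.getLast hne)‖
  · exact (S.ping_pong L hne hL.isReduced z hz).2.ne (by rw [hfix])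
  have hne' : invRev L ≠ [] := by simpa [FreeGroup.invRev] using hne
  have hsep : L.getLast hne ≠ ((L.head hne).1, !(L.head hne).2) := by
    intro h
    have := hL.2 _ (List.getLast?_eq_some_getLast hne) _ (List.head?_eq_some_head hne)
    simp [h] at this
  have hz' := S.radius_lt_norm_sub_of_le hsep (not_lt.1 hz)
  rw [← FreeGroup.getLast_invRev hne hne'] at hz'
  have := (S.ping_pong (invRev L) hne' hL.isReduced.invRev z hz').2
  rw [← FreeGroup.inv_mk, map_inv, inv_smul_eq_iff.2 hfix.symm] at this
  exact lt_irrefl _ this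

theorem eq_one_of_smul_eq_self {x : FreeGroup ι} {z : ℍ} (h : S.hom x • z = z) : x = 1 := by
  classical
  set L := x.toWord
  set c := FreeGroup.mk (reduceCyclically.conjugator L)
  have hx : x = c * FreeGroup.mk (reduceCyclically L) * c⁻¹ := by
    rw [FreeGroup.inv_mk, FreeGroup.mul_mk, FreeGroup.mul_mk,
      reduceCyclically.conj_conjugator_reduceCyclically, FreeGroup.mk_toWord]
  obtain hR | hR := eq_or_ne (reduceCyclically L) []
  · rw [hx, hR, ← FreeGroup.one_eq_mk, mul_one, mul_inv_cancel]
  refine absurd ?_ (S.smul_ne_self_of_isCyclicallyReduced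
    (reduceCyclically.isCyclicallyReduced FreeGroup.isReduced_toWord) hR ((S.hom c)⁻¹ • z))
  rw [hx, map_mul, map_mul, map_inv, mul_smul, mul_smul] at h
  rwa [eq_inv_smul_iff]

end SchottkyData

lemma s_eq (k : ℕ) : s k = 3 * s (k / 2) + 2 * (k % 2) := by
  cases k with
  | zero => simp [s]
  | succ k => rcases Nat.mod_two_eq_zero_or_one (k + 1) with h | h <;> simp [s, h]

lemma s_injective : Function.Injective s := by
  intro k k' h
  induction hN : k + k' using Nat.strong_induction_on generalizing k k' with
  | _ N ih =>
    have := s_eq k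
    have := s_eq k'
    rcases Nat.eq_zero_or_pos N with rfl | hN0
    · omega
    · have := ih (k / 2 + k' / 2) (by omega) (by omega) rfl
      omega

/-- The ternary digits of `s k` are `0` or `2`, which keeps `2 * s k + 1` away from the odd
multiples of `3 ^ (d + 1)`. -/
lemma three_pow_add_one_le_abs_sub (d : ℕ) (m : ℤ) (k : ℕ) :
    3 ^ d + 1 ≤ |3 ^ (d + 1) * (2 * m + 1) - (2 * s k + 1)| := by
  have hs : (s k : ℤ) = 3 * s (k / 2) + 2 * (k % 2 : ℕ) := mod_cast s_eq k
  have hk := Nat.mod_two_eq_zero_or_one k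
  induction d generalizing k with
  | zero =>
    rw [le_abs', hs]
    omega
  | succ d ih =>
    have ih := ih (k / 2) (by exact_mod_cast s_eq (k / 2)) (Nat.mod_two_eq_zero_or_one _)
    have hX : (3 : ℤ) ^ (d + 1 + 1) * (2 * m + 1) - (2 * s k + 1) =
        3 * (3 ^ (d + 1) * (2 * m + 1) - (2 * s (k / 2) + 1)) + 2 - 4 * (k % 2 : ℕ) := by
      rw [hs]; ring
    rw [le_abs'] at ih ⊢
    rw [hX]
    generalize (3 : ℤ) ^ (d + 1) * (2 * m + 1) - (2 * s (k / 2) + 1) = X at ih ⊢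
    rw [pow_succ]
    omega

/-- `radC_add_radC_lt_abs_sub` multiplied by `4 * 3 ^ (n + n')`. -/
lemma three_pow_add_three_pow_lt {n n' k k' : ℕ} (h : (n, k) ≠ (n', k')) :
    (3 : ℤ) ^ n + 3 ^ n' < 6 * |3 ^ n' * (2 * (s k : ℤ) + 1) - 3 ^ n * (2 * (s k' : ℤ) + 1)| := by
  wlog hn : n ≤ n' generalizing n n' k k'
  · rw [abs_sub_comm, add_comm]
    exact this h.symm (by omega)
  obtain ⟨d, rfl⟩ := Nat.exists_eq_add_of_le hn
  have h3n : (0 : ℤ) < 3 ^ n := by positivity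
  rw [show (3 : ℤ) ^ (n + d) * (2 * s k + 1) - 3 ^ n * (2 * s k' + 1) =
      3 ^ n * (3 ^ d * (2 * s k + 1) - (2 * s k' + 1)) by ring, abs_mul, abs_of_pos h3n, pow_add]
  cases d with
  | zero =>
    have hk : (s k : ℤ) ≠ s k' := Nat.cast_injective.ne (s_injective.ne (by simpa using h))
    have hsep : (2 : ℤ) ≤ |3 ^ 0 * (2 * (s k : ℤ) + 1) - (2 * (s k' : ℤ) + 1)| := by
      rw [pow_zero, one_mul, le_abs']; omega
    nlinarith [mul_le_mul_of_nonneg_left hsep h3n.le]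
  | succ d =>
    have hsep := three_pow_add_one_le_abs_sub d (s k) k'
    have hpow : (3 : ℤ) ^ n * 3 ^ (d + 1) = 3 * (3 ^ n * 3 ^ d) := by ring
    linarith [mul_le_mul_of_nonneg_left hsep h3n.le, mul_pos h3n (pow_pos three_pos d)]

lemma radC_pos (n : ℕ) : 0 < radC n := by unfold radC; positivity

lemma radC_add_radC_lt_abs_sub {n n' k k' : ℕ} (h : (n, k) ≠ (n', k')) :
    radC n + radC n' < |alphaC n k - alphaC n' k'| := by
  set A : ℤ := 3 ^ n' * (2 * (s k : ℤ) + 1) - 3 ^ n * (2 * (s k' : ℤ) + 1)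
  have key : ((3 ^ n + 3 ^ n' : ℤ) : ℝ) < ((6 * |A| : ℤ) : ℝ) :=
    Int.cast_lt.2 (three_pow_add_three_pow_lt h)
  rw [Int.cast_mul, Int.cast_abs, Int.cast_ofNat] at key
  have hdiff : alphaC n k - alphaC n' k' = 6 * A / (4 * 3 ^ (n + n')) := by
    unfold alphaC A; push_cast; rw [pow_add]; field_simp; ring
  have hrad : radC n + radC n' = ((3 ^ n + 3 ^ n' : ℤ) : ℝ) / (4 * 3 ^ (n + n')) := by
    unfold radC; push_cast; rw [pow_add]; field_simp; ring
  rw [hdiff, hrad, abs_div, abs_mul, abs_of_pos (by norm_num : (0 : ℝ) < 6),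
    abs_of_pos (by positivity : (0 : ℝ) < 4 * 3 ^ (n + n'))]
  exact div_lt_div_of_pos_right key (by positivity)

lemma radC_add_radC_lt_add (n n' k k' : ℕ) : radC n + radC n' < alphaC n k + alphaC n' k' := by
  have hlt (n k : ℕ) : radC n < alphaC n k := by
    have hr : radC n ≤ 1 / 4 := by
      unfold radC
      gcongr
      exact le_mul_of_one_le_right (by norm_num) (one_le_pow₀ (by norm_num))
    have hα : (0 : ℝ) ≤ (3 * s k + 1) / 3 ^ n + 1 / (2 * 3 ^ n) := by positivity
    unfold alphaC
    linarith
  linarith [hlt n k, hlt n' k']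

def cantorSchottky : SchottkyData (ℕ × ℕ) where
  center ℓ := bif ℓ.2 then alphaC ℓ.1.1 ℓ.1.2 else -alphaC ℓ.1.1 ℓ.1.2
  radius p := radC p.1
  radius_pos p := radC_pos p.1
  disjoint := by
    rintro ⟨⟨n, k⟩, _ | _⟩ ⟨⟨n', k'⟩, _ | _⟩ h <;> simp only [cond_true, cond_false]
    · rw [neg_sub_neg, abs_sub_comm]
      exact radC_add_radC_lt_abs_sub (by simpa using h)
    · rw [← neg_add', abs_neg]
      exact (radC_add_radC_lt_add n n' k k').trans_le (le_abs_self _)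
    · rw [sub_neg_eq_add]
      exact (radC_add_radC_lt_add n n' k k').trans_le (le_abs_self _)
    · exact radC_add_radC_lt_abs_sub (by simpa using h)

/-- `Γ_C` acts freely on the upper half-plane. -/
theorem stmt_12 : ∀ g ∈ ΓC, ∀ z : ℍ, g • z = z → g = 1 := by
  intro g hg z hgz
  obtain ⟨x, rfl⟩ : g ∈ cantorSchottky.hom.range := by
    refine (Subgroup.closure_le _).2 ?_ hg
    rintro _ ⟨n, k, -, -, rfl⟩
    exact ⟨FreeGroup.of (n, k), FreeGroup.lift_apply_of⟩
  rw [cantorSchottky.eq_one_of_smul_eq_self hgz, map_one]
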